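/- arXiv:1802.03126 — 3 statements merged into one kernel-verified Lean document; each statement's English description precedes it below -/
import Mathlib

section
/- Let A be an m×n real matrix whose rows a_1^T,...,a_m^T all have unit Euclidean norm, let b ∈ ℝ^m, let x ∈ ℝ^n be any fixed vector, and set e = Ax − b. Let x_k ∈ ℝ^n, and suppose ‖Ax_k − b‖_∞ > 4‖e‖_∞. Let i be an index maximizing (a_i^T x_k − b_i)^2 over all rows, and define the Motzkin iterate x_{k+1} = x_k + (b_i − a_i^T x_k) a_i. Then ‖x_{k+1} − x‖² ≤ ‖x_k − x‖² − (1/2)‖Ax_k − b‖_∞². -/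
/-!
Write `r = A xk - b` and `e = A x - b`. Since `a_i` is a unit vector, the Motzkin step gives
`‖x_{k+1} - x‖² = ‖x_k - x‖² - 2 r_i ⟨a_i, x_k - x⟩ + r_i²`,
and `⟨a_i, x_k - x⟩ = r_i - e_i`, so `‖x_{k+1} - x‖² = ‖x_k - x‖² - r_i² + 2 r_i e_i`.
As `i` is a most violated row, `|r_i| = ‖r‖_∞ > 4 ‖e‖_∞ ≥ 4 |e_i|`, whence `2 r_i e_i ≤ r_i² / 2`.
-/

open Matrix

lemma sum_sq_add_mul {ι : Type*} [Fintype ι] (v w : ι → ℝ) (c : ℝ) :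
    ∑ j, (v j + c * w j) ^ 2 = ∑ j, v j ^ 2 + 2 * c * (w ⬝ᵥ v) + c ^ 2 * ∑ j, w j ^ 2 := by
  simp only [dotProduct, Finset.mul_sum, ← Finset.sum_add_distrib]
  exact Finset.sum_congr rfl fun j _ ↦ by ring

lemma pi_norm_eq_abs_of_forall_sq_le {ι : Type*} [Fintype ι] {r : ι → ℝ} {i : ι}
    (hi : ∀ j, r j ^ 2 ≤ r i ^ 2) : ‖r‖ = |r i| := by
  refine le_antisymm ((pi_norm_le_iff_of_nonneg (abs_nonneg _)).2 fun j ↦ ?_) ?_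
  · exact Real.norm_eq_abs (r j) ▸ sq_le_sq.1 (hi j)
  · exact Real.norm_eq_abs (r i) ▸ norm_le_pi_norm r i

lemma sum_sq_motzkin_step_sub {ι κ : Type*} [Fintype ι] [Fintype κ]
    (A : Matrix κ ι ℝ) (b : κ → ℝ) (x xk : ι → ℝ) {i : κ} (hrow : ∑ j, A i j ^ 2 = 1) :
    ∑ j, ((xk + (b i - (A *ᵥ xk) i) • A i) j - x j) ^ 2
      = ∑ j, (xk j - x j) ^ 2 - (A *ᵥ xk - b) i ^ 2
        + 2 * (A *ᵥ xk - b) i * (A *ᵥ x - b) i := by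
  have hdot : A i ⬝ᵥ (xk - x) = (A *ᵥ xk) i - (A *ᵥ x) i := by
    rw [dotProduct_sub]; rfl
  calc ∑ j, ((xk + (b i - (A *ᵥ xk) i) • A i) j - x j) ^ 2
      = ∑ j, ((xk - x) j + (b i - (A *ᵥ xk) i) * A i j) ^ 2 :=
        Finset.sum_congr rfl fun j _ ↦ by
          simp only [Pi.add_apply, Pi.sub_apply, Pi.smul_apply, smul_eq_mul]
          ring
    _ = _ := by
        rw [sum_sq_add_mul, hrow, hdot]
        simp only [Pi.sub_apply]
        ring

lemma two_mul_mul_le_half_sq {r e : ℝ} (h : 4 * |e| ≤ |r|) : 2 * r * e ≤ r ^ 2 / 2 := by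
  have hprod : 2 * r * e ≤ 2 * |r| * |e| := by
    rw [mul_assoc, mul_assoc, ← abs_mul]
    exact mul_le_mul_of_nonneg_left (le_abs_self _) two_pos.le
  nlinarith [abs_nonneg r, sq_abs r]

/-- **Motzkin progress lemma (Lemma 1).**
`A` is an `m × n` real matrix whose rows `a i = A i` all have unit Euclidean norm,
`b ∈ ℝ^m`, `x ∈ ℝ^n` is any fixed vector and `e = A x - b`.  The `‖·‖` on `Fin m → ℝ`
is the sup (max) norm, while Euclidean norms on `ℝ^n` appear squared as sums of squares.
If `‖A xk - b‖_∞ > 4 ‖e‖_∞` and `xk1` is the Motzkin iterate obtained by projecting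
onto a most violated constraint `i`, then
`‖xk1 - x‖² ≤ ‖xk - x‖² - (1/2) ‖A xk - b‖_∞²`. -/
theorem motzkin_progress
    {m n : ℕ} (A : Matrix (Fin m) (Fin n) ℝ) (b : Fin m → ℝ)
    (x xk xk1 : Fin n → ℝ) (e : Fin m → ℝ)
    (hrows : ∀ i : Fin m, ∑ j, (A i j) ^ 2 = 1)
    (he : e = A.mulVec x - b)
    (hres : 4 * ‖e‖ < ‖A.mulVec xk - b‖)
    (i : Fin m)
    (hi : ∀ j : Fin m, (A.mulVec xk j - b j) ^ 2 ≤ (A.mulVec xk i - b i) ^ 2)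
    (hupdate : xk1 = xk + (b i - A.mulVec xk i) • A i) :
    ∑ j, (xk1 j - x j) ^ 2 ≤ ∑ j, (xk j - x j) ^ 2 - (1 / 2) * ‖A.mulVec xk - b‖ ^ 2 := by
  have hnorm : ‖A *ᵥ xk - b‖ = |(A *ᵥ xk - b) i| := pi_norm_eq_abs_of_forall_sq_le hi
  have hei : 4 * |e i| ≤ |(A *ᵥ xk - b) i| := by
    have hei_le : |e i| ≤ ‖e‖ := Real.norm_eq_abs (e i) ▸ norm_le_pi_norm e i
    linarith
  have hcross := two_mul_mul_le_half_sq hei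
  rw [hupdate, sum_sq_motzkin_step_sub A b x xk (hrows i), hnorm, sq_abs, ← he]
  linarith
end

section
/- Let A be an m×n real matrix with full column rank n and rows a_1^T,...,a_m^T of unit Euclidean norm, let σ_min(A) denote its smallest singular value, let b ∈ ℝ^m, let x ∈ ℝ^n be any fixed vector, and set e = Ax − b. Let x_k ∈ ℝ^n satisfy ‖Ax_k − b‖_∞ ≤ 4‖e‖_∞, let i be an index maximizing (a_i^T x_k − b_i)^2 over all rows, and define x_{k+1} = x_k + (b_i − a_i^T x_k) a_i. Then ‖x_{k+1} − x‖² ≤ (25 m σ_min(A)^{−2} + 8) ‖e‖_∞². -/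
/-!
Write `d = xₖ - x` and `r = A xₖ - b`, so that `A d = r - e`. A Motzkin step is an orthogonal
projection onto the hyperplane of row `i`, hence `xₖ₊₁ - x = d - rᵢ aᵢ` with `⟪aᵢ, d⟫ = rᵢ - eᵢ`, and
`‖d - rᵢ aᵢ‖² = ‖d‖² + eᵢ² - (rᵢ - eᵢ)² ≤ ‖d‖² + ‖e‖∞²`: the step can increase the error by at most
the size of the noise. On the other hand `‖A d‖∞ ≤ ‖r‖∞ + ‖e‖∞ ≤ 5 ‖e‖∞`, so
`σ² ‖d‖² ≤ ‖A d‖² ≤ 25 m ‖e‖∞²`.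
-/

open Matrix

section InnerProductSpace

variable {F : Type*} [NormedAddCommGroup F] [InnerProductSpace ℝ F]

lemma norm_sub_smul_sq_le_of_inner_eq {a d : F} {r ε : ℝ} (ha : ‖a‖ = 1)
    (had : inner ℝ a d = r - ε) : ‖d - r • a‖ ^ 2 ≤ ‖d‖ ^ 2 + ε ^ 2 := by
  have hdot : inner ℝ d (r • a) = r * (r - ε) := by
    rw [real_inner_smul_right, real_inner_comm, had]
  have hnorm : ‖r • a‖ ^ 2 = r ^ 2 := by
    rw [norm_smul, ha, mul_one, Real.norm_eq_abs, sq_abs]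
  rw [norm_sub_sq_real, hdot, hnorm]
  nlinarith [sq_nonneg (r - ε)]

end InnerProductSpace

section Coordinates

variable {ι κ : Type*} [Fintype ι] [Fintype κ]

lemma norm_toLp_sq_eq_sum_sq (v : ι → ℝ) : ‖WithLp.toLp 2 v‖ ^ 2 = ∑ j, v j ^ 2 := by
  simp [EuclideanSpace.norm_sq_eq]

lemma inner_toLp_eq_dotProduct (v w : ι → ℝ) :
    inner ℝ (WithLp.toLp 2 v) (WithLp.toLp 2 w) = v ⬝ᵥ w := by
  simp [PiLp.inner_apply, dotProduct, mul_comm]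

lemma sum_sub_mul_sq_le_of_dotProduct_eq {a d : ι → ℝ} {r ε : ℝ} (ha : ∑ j, a j ^ 2 = 1)
    (had : a ⬝ᵥ d = r - ε) : ∑ j, (d j - r * a j) ^ 2 ≤ ∑ j, d j ^ 2 + ε ^ 2 := by
  have ha' : ‖WithLp.toLp 2 a‖ = 1 := by
    rw [← pow_eq_one_iff_of_nonneg (norm_nonneg _) two_ne_zero, norm_toLp_sq_eq_sum_sq, ha]
  have h := norm_sub_smul_sq_le_of_inner_eq ha' (d := WithLp.toLp 2 d)
    (by rw [inner_toLp_eq_dotProduct, had])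
  rwa [← WithLp.toLp_smul, ← WithLp.toLp_sub, norm_toLp_sq_eq_sum_sq,
    norm_toLp_sq_eq_sum_sq] at h

lemma sq_apply_le_norm_sq (v : κ → ℝ) (j : κ) : v j ^ 2 ≤ ‖v‖ ^ 2 := by
  simpa [Real.norm_eq_abs, sq_abs] using pow_le_pow_left₀ (norm_nonneg _) (norm_le_pi_norm v j) 2

lemma sum_sq_le_card_mul_norm_sq (v : κ → ℝ) : ∑ j, v j ^ 2 ≤ Fintype.card κ * ‖v‖ ^ 2 := by
  simpa using Finset.sum_le_card_nsmul Finset.univ _ _ fun j (_ : j ∈ Finset.univ) =>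
    sq_apply_le_norm_sq v j

lemma sum_sq_le_of_sq_mul_le_sum_sq_mulVec (A : Matrix κ ι ℝ) {σ : ℝ} (hσ : 0 < σ)
    (hσmin : ∀ v : ι → ℝ, σ ^ 2 * ∑ j, v j ^ 2 ≤ ∑ i, (A *ᵥ v) i ^ 2) (v : ι → ℝ) :
    ∑ j, v j ^ 2 ≤ Fintype.card κ * (σ ^ 2)⁻¹ * ‖A *ᵥ v‖ ^ 2 := by
  rw [mul_right_comm, ← div_eq_mul_inv, le_div_iff₀' (by positivity)]
  exact (hσmin v).trans (sum_sq_le_card_mul_norm_sq _)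

end Coordinates

theorem motzkin_small_residual_next_iterate_bound_general
    {m n : ℕ} (A : Matrix (Fin m) (Fin n) ℝ)
    (hrows : ∀ i : Fin m, ∑ j, (A i j) ^ 2 = 1)
    (σ : ℝ) (hσ : 0 < σ)
    (hσmin : ∀ v : Fin n → ℝ, σ ^ 2 * ∑ j, (v j) ^ 2 ≤ ∑ i, (A.mulVec v i) ^ 2)
    (b : Fin m → ℝ) (x xk xk1 : Fin n → ℝ) (e : Fin m → ℝ)
    (he : e = A.mulVec x - b)
    (hres : ‖A.mulVec xk - b‖ ≤ 4 * ‖e‖)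
    (i : Fin m)
    (hupdate : xk1 = xk + (b i - A.mulVec xk i) • A i) :
    ∑ j, (xk1 j - x j) ^ 2 ≤ (25 * m * (σ ^ 2)⁻¹ + 8) * ‖e‖ ^ 2 := by
  set r := A *ᵥ xk - b
  have hAd : A *ᵥ (xk - x) = r - e := by
    rw [mulVec_sub, he]
    exact (sub_sub_sub_cancel_right _ _ _).symm
  have hstep : ∀ j, xk1 j - x j = (xk - x) j - r i * A i j := fun j => by
    simp only [hupdate, r, Pi.add_apply, Pi.sub_apply, Pi.smul_apply, smul_eq_mul]
    ring
  have hinner : A i ⬝ᵥ (xk - x) = r i - e i := congrFun hAd i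
  have hAd_le : ‖A *ᵥ (xk - x)‖ ≤ 5 * ‖e‖ := by
    rw [hAd]
    linarith [norm_sub_le r e]
  have hd := sum_sq_le_of_sq_mul_le_sum_sq_mulVec A hσ hσmin (xk - x)
  simp only [Fintype.card_fin] at hd
  calc ∑ j, (xk1 j - x j) ^ 2 = ∑ j, ((xk - x) j - r i * A i j) ^ 2 := by simp only [hstep]
    _ ≤ ∑ j, (xk - x) j ^ 2 + e i ^ 2 := sum_sub_mul_sq_le_of_dotProduct_eq (hrows i) hinner
    _ ≤ m * (σ ^ 2)⁻¹ * (5 * ‖e‖) ^ 2 + ‖e‖ ^ 2 := by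
      exact add_le_add (hd.trans (by gcongr)) (sq_apply_le_norm_sq e i)
    _ ≤ (25 * m * (σ ^ 2)⁻¹ + 8) * ‖e‖ ^ 2 := by
      nlinarith [sq_nonneg ‖e‖]

/-- **Next-iterate bound once the residual is small (part (iii) of Corollary 1).**
`A` is an `m × n` real matrix (`m ≥ n`) with full column rank `n` and rows of unit
Euclidean norm; `σ` denotes its smallest singular value, which is positive and
satisfies `σ ‖v‖ ≤ ‖A v‖` for all `v` (stated with squared Euclidean norms).
`b ∈ ℝ^m`, `x ∈ ℝ^n` is any fixed vector, `e = A x - b`, and `‖·‖` on `Fin m → ℝ`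
is the sup (max) norm.  If `‖A xk - b‖_∞ ≤ 4 ‖e‖_∞` and `xk1` is the Motzkin iterate
obtained from `xk`, then `‖xk1 - x‖² ≤ (25 m σ⁻² + 8) ‖e‖_∞²`. -/
theorem motzkin_small_residual_next_iterate_bound
    {m n : ℕ} (hmn : n ≤ m) (A : Matrix (Fin m) (Fin n) ℝ)
    (hrank : A.rank = n)
    (hrows : ∀ i : Fin m, ∑ j, (A i j) ^ 2 = 1)
    (σ : ℝ) (hσ : 0 < σ)
    (hσmin : ∀ v : Fin n → ℝ, σ ^ 2 * ∑ j, (v j) ^ 2 ≤ ∑ i, (A.mulVec v i) ^ 2)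
    (b : Fin m → ℝ) (x xk xk1 : Fin n → ℝ) (e : Fin m → ℝ)
    (he : e = A.mulVec x - b)
    (hres : ‖A.mulVec xk - b‖ ≤ 4 * ‖e‖)
    (i : Fin m)
    (hi : ∀ j : Fin m, (A.mulVec xk j - b j) ^ 2 ≤ (A.mulVec xk i - b i) ^ 2)
    (hupdate : xk1 = xk + (b i - A.mulVec xk i) • A i) :
    ∑ j, (xk1 j - x j) ^ 2 ≤ (25 * m * (σ ^ 2)⁻¹ + 8) * ‖e‖ ^ 2 :=
  motzkin_small_residual_next_iterate_bound_general A hrows σ hσ hσmin b x xk xk1 e he hres i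
    hupdate
end

section
/- Let A be an m×n real matrix with full column rank n and rows of unit Euclidean norm, let b ∈ ℝ^m, let x ∈ ℝ^n be fixed, and set e = Ax − b. Let x_k ∈ ℝ^n satisfy ‖Ax_k − b‖_∞ > 4‖e‖_∞ and A x_k ≠ A x, and let x_{k+1} be the Motzkin iterate obtained from x_k. Let γ_k = ‖A(x_k − x)‖² / ‖A(x_k − x)‖_∞². Then ‖x_{k+1} − x‖² ≤ (1 − σ_min(A)²/(4γ_k)) ‖x_k − x‖² + (1/2)‖e‖_∞². -/
/-!
Write `r = A xₖ - b`, `c = rᵢ` and `u = A (xₖ - x) = r - e`. Since the row `aᵢ` has unit norm,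
the Motzkin step changes the squared distance to `x` by exactly `-c² + 2 c eᵢ`, and `|eᵢ| < |c| / 4`
makes this at most `-c² / 2`. On the other hand `σ² ‖xₖ - x‖² ≤ ‖u‖² = γ ‖u‖∞²`, and
`‖u‖∞ ≤ ‖r‖∞ + ‖e‖∞ ≤ 5 |c| / 4`, so `σ² / (4 γ) ‖xₖ - x‖² ≤ 25 c² / 64 ≤ c² / 2`.
-/

open Finset Matrix

section DynamicRange

variable {ι : Type*} [Fintype ι]

/-- `‖v‖₂² / ‖v‖∞²`: the norm on `ι → ℝ` is the sup norm. -/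
noncomputable def dynamicRange (v : ι → ℝ) : ℝ :=
  (∑ i, v i ^ 2) / ‖v‖ ^ 2

theorem div_dynamicRange_le {s : ℝ} {v : ι → ℝ} (hs : s ≤ ∑ i, v i ^ 2) :
    s / dynamicRange v ≤ ‖v‖ ^ 2 := by
  unfold dynamicRange
  set U := ∑ i, v i ^ 2
  rcases (sq_nonneg ‖v‖).eq_or_lt with hN | hN
  · rw [← hN, div_zero, div_zero]
  have hU₀ : 0 ≤ U := sum_nonneg fun i _ => sq_nonneg (v i)
  rcases hU₀.eq_or_lt with hU | hU
  · rw [← hU, zero_div, div_zero]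
    exact hN.le
  rw [div_div_eq_mul_div, div_le_iff₀ hU]
  exact mul_le_mul_of_nonneg_right hs hN.le |>.trans_eq (mul_comm _ _)

theorem norm_le_abs_of_forall_sq_le {v : ι → ℝ} {i : ι} (h : ∀ j, v j ^ 2 ≤ v i ^ 2) :
    ‖v‖ ≤ |v i| :=
  (pi_norm_le_iff_of_nonneg (abs_nonneg _)).2 fun j => by
    simpa only [Real.norm_eq_abs] using sq_le_sq.1 (h j)

end DynamicRange

section MotzkinStep

variable {m n : Type*} [Fintype n]

theorem sum_sq_add_smul_of_sum_sq_eq_one {a : n → ℝ} (ha : ∑ j, a j ^ 2 = 1) (w : n → ℝ)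
    (t : ℝ) : ∑ j, (w + t • a) j ^ 2 = ∑ j, w j ^ 2 + 2 * t * (a ⬝ᵥ w) + t ^ 2 := by
  calc ∑ j, (w + t • a) j ^ 2 = ∑ j, (w j ^ 2 + 2 * t * (a j * w j) + t ^ 2 * a j ^ 2) :=
        sum_congr rfl fun j _ => by simp only [Pi.add_apply, Pi.smul_apply, smul_eq_mul]; ring
    _ = ∑ j, w j ^ 2 + 2 * t * (a ⬝ᵥ w) + t ^ 2 := by
        rw [sum_add_distrib, sum_add_distrib, ← mul_sum, ← mul_sum, ha, mul_one]; rfl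

theorem sum_sq_kaczmarz_step_sub (A : Matrix m n ℝ) (b : m → ℝ) {i : m}
    (hrow : ∑ j, A i j ^ 2 = 1) (x y : n → ℝ) :
    ∑ j, ((y + (b i - (A *ᵥ y) i) • A i) j - x j) ^ 2 =
      ∑ j, (y j - x j) ^ 2 - ((A *ᵥ y) i - b i) ^ 2 +
        2 * ((A *ᵥ y) i - b i) * ((A *ᵥ x) i - b i) := by
  have hshift : ∑ j, ((y + (b i - (A *ᵥ y) i) • A i) j - x j) ^ 2 =
      ∑ j, ((y - x) + (b i - (A *ᵥ y) i) • A i) j ^ 2 :=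
    sum_congr rfl fun j _ => by simp only [Pi.add_apply, Pi.sub_apply, Pi.smul_apply]; ring_nf
  have hrow_dot : A i ⬝ᵥ (y - x) = (A *ᵥ y) i - (A *ᵥ x) i := by
    rw [dotProduct_sub]; rfl
  rw [hshift, sum_sq_add_smul_of_sum_sq_eq_one hrow, hrow_dot]
  simp only [Pi.sub_apply]
  ring

theorem sum_sq_kaczmarz_step_sub_le (A : Matrix m n ℝ) (b : m → ℝ) {i : m}
    (hrow : ∑ j, A i j ^ 2 = 1) {x y : n → ℝ}
    (hres : 4 * |(A *ᵥ x) i - b i| ≤ |(A *ᵥ y) i - b i|) :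
    ∑ j, ((y + (b i - (A *ᵥ y) i) • A i) j - x j) ^ 2 ≤
      ∑ j, (y j - x j) ^ 2 - ((A *ᵥ y) i - b i) ^ 2 / 2 := by
  rw [sum_sq_kaczmarz_step_sub A b hrow]
  set c := (A *ᵥ y) i - b i
  set e := (A *ᵥ x) i - b i
  have hce : 4 * (c * e) ≤ c ^ 2 := by
    calc 4 * (c * e) ≤ |c| * (4 * |e|) := by linarith [le_abs_self (c * e), abs_mul c e]
      _ ≤ |c| * |c| := by gcongr
      _ = c ^ 2 := by rw [abs_mul_abs_self, sq]
  linarith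

end MotzkinStep

theorem motzkin_dynamic_range_contraction_general
    {m n : ℕ} (A : Matrix (Fin m) (Fin n) ℝ)
    (hrows : ∀ i : Fin m, ∑ j, (A i j) ^ 2 = 1)
    (σ : ℝ)
    (hσmin : ∀ v : Fin n → ℝ, σ ^ 2 * ∑ j, (v j) ^ 2 ≤ ∑ i, (A.mulVec v i) ^ 2)
    (b : Fin m → ℝ) (x xk xk1 : Fin n → ℝ) (e : Fin m → ℝ)
    (he : e = A.mulVec x - b)
    (hres : 4 * ‖e‖ < ‖A.mulVec xk - b‖)
    (i : Fin m)
    (hi : ∀ j : Fin m, (A.mulVec xk j - b j) ^ 2 ≤ (A.mulVec xk i - b i) ^ 2)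
    (hupdate : xk1 = xk + (b i - A.mulVec xk i) • A i)
    (γ : ℝ)
    (hγ : γ = (∑ i, (A.mulVec (xk - x) i) ^ 2) / ‖A.mulVec (xk - x)‖ ^ 2) :
    ∑ j, (xk1 j - x j) ^ 2 ≤
      (1 - σ ^ 2 / (4 * γ)) * ∑ j, (xk j - x j) ^ 2 + (1 / 2) * ‖e‖ ^ 2 := by
  subst hupdate he
  have hr : ‖A *ᵥ xk - b‖ ≤ |(A *ᵥ xk - b) i| := norm_le_abs_of_forall_sq_le hi
  have hstep := sum_sq_kaczmarz_step_sub_le A b (hrows i) (x := x) (y := xk) <| by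
    calc 4 * |(A *ᵥ x - b) i| ≤ 4 * ‖A *ᵥ x - b‖ := by
          gcongr; exact norm_le_pi_norm (A *ᵥ x - b) i
      _ ≤ |(A *ᵥ xk - b) i| := by linarith
  set r := A *ᵥ xk - b
  set D := ∑ j, (xk j - x j) ^ 2
  have hu : ‖A *ᵥ (xk - x)‖ ≤ 5 / 4 * |r i| := by
    rw [mulVec_sub, ← sub_sub_sub_cancel_right _ _ b]
    linarith [norm_sub_le r (A *ᵥ x - b)]
  have hu_sq : ‖A *ᵥ (xk - x)‖ ^ 2 ≤ 25 / 16 * r i ^ 2 := by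
    nlinarith [norm_nonneg (A *ᵥ (xk - x)), sq_abs (r i)]
  have hrange : σ ^ 2 * D / γ ≤ ‖A *ᵥ (xk - x)‖ ^ 2 := by
    rw [hγ]; exact div_dynamicRange_le (hσmin (xk - x))
  have hfactor : (1 - σ ^ 2 / (4 * γ)) * D = D - σ ^ 2 * D / γ / 4 := by ring
  change _ ≤ D - r i ^ 2 / 2 at hstep
  rw [hfactor]
  linarith [sq_nonneg (r i), sq_nonneg ‖A *ᵥ x - b‖]

/-- **One-step accelerated contraction via the dynamic range (inequality (11)).**
`A` is an `m × n` real matrix (`m ≥ n`) with full column rank `n` and rows of unit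
Euclidean norm; `σ` denotes its smallest singular value, which is positive and
satisfies `σ ‖v‖ ≤ ‖A v‖` for all `v` (stated with squared Euclidean norms).
`b ∈ ℝ^m`, `x ∈ ℝ^n` is fixed, `e = A x - b`, and `‖·‖` on `Fin m → ℝ` is the sup
(max) norm.  Suppose `‖A xk - b‖_∞ > 4 ‖e‖_∞` and `A xk ≠ A x`, let `xk1` be the
Motzkin iterate obtained from `xk`, and let
`γ = ‖A (xk - x)‖² / ‖A (xk - x)‖_∞²` be the dynamic range.  Then
`‖xk1 - x‖² ≤ (1 - σ²/(4 γ)) ‖xk - x‖² + (1/2) ‖e‖_∞²`. -/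
theorem motzkin_dynamic_range_contraction
    {m n : ℕ} (hmn : n ≤ m) (A : Matrix (Fin m) (Fin n) ℝ)
    (hrank : A.rank = n)
    (hrows : ∀ i : Fin m, ∑ j, (A i j) ^ 2 = 1)
    (σ : ℝ) (hσ : 0 < σ)
    (hσmin : ∀ v : Fin n → ℝ, σ ^ 2 * ∑ j, (v j) ^ 2 ≤ ∑ i, (A.mulVec v i) ^ 2)
    (b : Fin m → ℝ) (x xk xk1 : Fin n → ℝ) (e : Fin m → ℝ)
    (he : e = A.mulVec x - b)
    (hres : 4 * ‖e‖ < ‖A.mulVec xk - b‖)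
    (hne : A.mulVec xk ≠ A.mulVec x)
    (i : Fin m)
    (hi : ∀ j : Fin m, (A.mulVec xk j - b j) ^ 2 ≤ (A.mulVec xk i - b i) ^ 2)
    (hupdate : xk1 = xk + (b i - A.mulVec xk i) • A i)
    (γ : ℝ)
    (hγ : γ = (∑ i, (A.mulVec (xk - x) i) ^ 2) / ‖A.mulVec (xk - x)‖ ^ 2) :
    ∑ j, (xk1 j - x j) ^ 2 ≤
      (1 - σ ^ 2 / (4 * γ)) * ∑ j, (xk j - x j) ^ 2 + (1 / 2) * ‖e‖ ^ 2 :=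
  motzkin_dynamic_range_contraction_general A hrows σ hσmin b x xk xk1 e he hres i hi hupdate γ hγ
end
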